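/- Let G = (V, E) and G′ = (V, E′) be distinct graphs on the same finite vertex set V (so E ≠ E′, and max(|E|, |E′|) ≥ 1). Then for every partition 𝒜 of V, |q_𝒜(G) − q_𝒜(G′)| < 2·|E △ E′| / max(|E|, |E′|), and moreover |q*(G) − q*(G′)| < 2·|E △ E′| / max(|E|, |E′|), where E △ E′ denotes the symmetric difference of the edge sets. -/

import Mathlib

/-!
Fix a partition and let `K ≤ H` have `m < m'` edges, `k = m' - m`; write `e_K` for the number of
internal edges of `K` and `T = ∑ vol² / 4m²` for the degree tax. The edge term moves by
`d / m' - e_K k / (m m')` with `0 ≤ d ≤ k`. Writing `vol_H = vol_K + δ` with `δ ≥ 0` and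
`∑ δ = 2k`, Sedrakyan's inequality gives `T_H ≤ (m / m') T_K + k / m'`, so the tax rises by less
than `k / m'`; it falls by at most `T_K (1 - m² / m'²) < 2 (k / m') T_K`, and `T_K ≤ (m + e_K) / 2m`
because `vol(A) ≤ m + e(A)`. Either way `|q_𝒜(K) - q_𝒜(H)| < 2k / m'`. For `G ≠ G'` compare both
with `G ⊔ G'`, whose two edge defects add up to `|E △ E'|`, and pass to the maximum over the
finitely many partitions.
-/

open Finset
open scoped Classical

/-- The number of edges of a finite graph. -/
noncomputable def edgeCount {V : Type} [Fintype V] [DecidableEq V] (G : SimpleGraph V) : ℕ :=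
  G.edgeFinset.card

/-- vol(A): the sum over vertices of A of their degree in G. -/
noncomputable def degSum {V : Type} [Fintype V] [DecidableEq V] (G : SimpleGraph V)
    (A : Finset V) : ℕ :=
  ∑ v ∈ A, G.degree v

/-- e(A): the number of edges of G with both endpoints in A. -/
noncomputable def intEdges {V : Type} [Fintype V] [DecidableEq V] (G : SimpleGraph V)
    (A : Finset V) : ℕ :=
  (G.edgeFinset.filter (fun e => ∀ v ∈ e, v ∈ A)).card

/-- The modularity score q_𝒜(G) of a vertex partition 𝒜 of G; it is 0 if G has no edges. -/
noncomputable def modScore {V : Type} [Fintype V] [DecidableEq V] (G : SimpleGraph V)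
    (P : Finpartition (univ : Finset V)) : ℝ :=
  if edgeCount G = 0 then 0 else
    (∑ A ∈ P.parts, (intEdges G A : ℝ)) / (edgeCount G : ℝ)
      - (∑ A ∈ P.parts, (degSum G A : ℝ) ^ 2) / (4 * (edgeCount G : ℝ) ^ 2)

/-- The modularity q*(G) of a graph: the maximum of q_𝒜(G) over all vertex partitions 𝒜. -/
noncomputable def modularity {V : Type} [Fintype V] [DecidableEq V] (G : SimpleGraph V) : ℝ :=
  ⨆ P : Finpartition (univ : Finset V), modScore G P

/-- The probability that the random subgraph G_p of G (each edge of G retained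
independently with probability p) satisfies the predicate Q. -/
noncomputable def subgraphProb {V : Type} [Fintype V] [DecidableEq V] (G : SimpleGraph V)
    (p : ℝ) (Q : SimpleGraph V → Prop) : ℝ :=
  ∑ F ∈ G.edgeFinset.powerset,
    if Q (SimpleGraph.fromEdgeSet (F : Set (Sym2 V))) then
      p ^ F.card * (1 - p) ^ (G.edgeFinset.card - F.card)
    else 0

theorem add_sq_div_add_le {a b x y : ℝ} (hx : 0 < x) (hy : 0 < y) :
    (a + b) ^ 2 / (x + y) ≤ a ^ 2 / x + b ^ 2 / y := by
  rw [div_add_div _ _ hx.ne' hy.ne', div_le_div_iff₀ (by positivity) (by positivity)]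
  nlinarith [sq_nonneg (a * y - b * x), mul_pos hx hy]

theorem Finset.sum_sq_pos_of_sum_ne_zero {ι : Type*} {s : Finset ι} {a : ι → ℝ}
    (h : ∑ i ∈ s, a i ≠ 0) : 0 < ∑ i ∈ s, a i ^ 2 := by
  obtain ⟨i, hi, hai⟩ := exists_ne_zero_of_sum_ne_zero h
  exact sum_pos' (fun j _ => sq_nonneg (a j)) ⟨i, hi, by positivity⟩

theorem Finset.card_symmDiff_add_card_add_card {α : Type*} [DecidableEq α] (s t : Finset α) :
    #(symmDiff s t) + #s + #t = 2 * #(s ∪ t) := by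
  have h := card_union_add_card_inter s t
  rw [symmDiff_eq_sup_sdiff_inf, sup_eq_union, inf_eq_inter,
    card_sdiff_of_subset inter_subset_union]
  have := card_le_card (inter_subset_union (s := s) (t := t))
  omega

theorem abs_ciSup_sub_ciSup_lt {ι : Type*} [Finite ι] [Nonempty ι] {f g : ι → ℝ} {c : ℝ}
    (h : ∀ i, |f i - g i| < c) : |(⨆ i, f i) - ⨆ i, g i| < c := by
  obtain ⟨i, hi⟩ := Finite.exists_max f
  obtain ⟨j, hj⟩ := Finite.exists_max g
  rw [le_antisymm (ciSup_le hi) (le_ciSup (Finite.bddAbove_range f) i),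
    le_antisymm (ciSup_le hj) (le_ciSup (Finite.bddAbove_range g) j), abs_sub_lt_iff]
  have hfg := (abs_sub_lt_iff.1 (h i)).1
  have hgf := (abs_sub_lt_iff.1 (h j)).2
  constructor <;> linarith [hi j, hj i]

section ScoreBounds

-- The modularity formula `E / m - D / (4 m²)` before (`ν` edges, `EK` internal, volumes `a`)
-- and after (`μ`, `EH`, `b`) adding `μ - ν` edges.

variable {ι : Type*} {s : Finset ι} {a b : ι → ℝ} {EK EH ν μ : ℝ}

theorem score_after_sub_score_before_lt (hν : 0 < ν) (hνμ : ν < μ) (ha : ∀ i ∈ s, 0 ≤ a i)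
    (hab : ∀ i ∈ s, a i ≤ b i) (hsa : ∑ i ∈ s, a i = 2 * ν) (hEK : 0 ≤ EK)
    (hEH : EH ≤ EK + (μ - ν)) (haE : ∀ i ∈ s, a i ≤ ν + EK) :
    (EH / μ - (∑ i ∈ s, b i ^ 2) / (4 * μ ^ 2)) - (EK / ν - (∑ i ∈ s, a i ^ 2) / (4 * ν ^ 2))
      < 2 * (μ - ν) / μ := by
  have hμ : 0 < μ := hν.trans hνμ
  have hb : ∑ i ∈ s, a i ^ 2 ≤ ∑ i ∈ s, b i ^ 2 :=
    sum_le_sum fun i hi => pow_le_pow_left₀ (ha i hi) (hab i hi) 2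
  have ha' : ∑ i ∈ s, a i ^ 2 ≤ 2 * ν * (ν + EK) := calc
    ∑ i ∈ s, a i ^ 2 ≤ ∑ i ∈ s, a i * (ν + EK) :=
      sum_le_sum fun i hi => by rw [sq]; exact mul_le_mul_of_nonneg_left (haE i hi) (ha i hi)
    _ = 2 * ν * (ν + EK) := by rw [← sum_mul, hsa]
  set D := ∑ i ∈ s, a i ^ 2
  have hEH' : EH / μ ≤ (EK + (μ - ν)) / μ := div_le_div_of_nonneg_right hEH hμ.le
  have hb' : D / (4 * μ ^ 2) ≤ (∑ i ∈ s, b i ^ 2) / (4 * μ ^ 2) :=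
    div_le_div_of_nonneg_right hb (by positivity)
  have hD : D / (4 * ν ^ 2) - D / (4 * μ ^ 2) ≤ (ν + EK) * (μ - ν) * (μ + ν) / (2 * μ ^ 2 * ν) := by
    rw [div_sub_div _ _ (by positivity) (by positivity),
      div_le_div_iff₀ (by positivity) (by positivity)]
    have : 0 ≤ 8 * μ ^ 2 * ν * ((μ - ν) * (μ + ν)) := by
      have := sub_pos.2 hνμ
      positivity
    nlinarith [mul_le_mul_of_nonneg_left ha' this]
  have : (EK + (μ - ν)) / μ - EK / ν + (ν + EK) * (μ - ν) * (μ + ν) / (2 * μ ^ 2 * ν)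
      < 2 * (μ - ν) / μ := by
    rw [← sub_pos]
    field_simp
    nlinarith [mul_pos (sub_pos.2 hνμ) (sub_pos.2 hνμ), mul_nonneg hEK (sq_nonneg (μ - ν))]
  linarith

theorem score_before_sub_score_after_lt (hν : 0 < ν) (hνμ : ν < μ)
    (hab : ∀ i ∈ s, a i ≤ b i) (hsa : ∑ i ∈ s, a i = 2 * ν) (hsb : ∑ i ∈ s, b i = 2 * μ)
    (hEK : EK ≤ ν) (hEKH : EK ≤ EH) :
    (EK / ν - (∑ i ∈ s, a i ^ 2) / (4 * ν ^ 2)) - (EH / μ - (∑ i ∈ s, b i ^ 2) / (4 * μ ^ 2))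
      < 2 * (μ - ν) / μ := by
  have hμ : 0 < μ := hν.trans hνμ
  have hk : 0 < μ - ν := sub_pos.2 hνμ
  have hD : 0 < ∑ i ∈ s, a i ^ 2 := sum_sq_pos_of_sum_ne_zero (by rw [hsa]; positivity)
  set D := ∑ i ∈ s, a i ^ 2
  have hδ : ∑ i ∈ s, (b i - a i) ^ 2 ≤ (2 * (μ - ν)) ^ 2 := by
    calc ∑ i ∈ s, (b i - a i) ^ 2 ≤ (∑ i ∈ s, (b i - a i)) ^ 2 :=
          sum_sq_le_sq_sum_of_nonneg fun i hi => sub_nonneg.2 (hab i hi)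
      _ = (2 * (μ - ν)) ^ 2 := by rw [sum_sub_distrib, hsa, hsb]; ring
  -- Sedrakyan's inequality, with `b = a + (b - a)` and `μ = ν + (μ - ν)`.
  have hb : (∑ i ∈ s, b i ^ 2) / μ ≤ D / ν + 4 * (μ - ν) := calc
    (∑ i ∈ s, b i ^ 2) / μ = ∑ i ∈ s, (a i + (b i - a i)) ^ 2 / (ν + (μ - ν)) := by
        rw [sum_div]; simp
    _ ≤ ∑ i ∈ s, (a i ^ 2 / ν + (b i - a i) ^ 2 / (μ - ν)) :=
        sum_le_sum fun i _ => add_sq_div_add_le hν hk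
    _ ≤ D / ν + (2 * (μ - ν)) ^ 2 / (μ - ν) := by
        rw [sum_add_distrib, ← sum_div, ← sum_div]
        gcongr
    _ = D / ν + 4 * (μ - ν) := by field_simp; ring
  have hb' : (∑ i ∈ s, b i ^ 2) / (4 * μ ^ 2) ≤ (D / ν + 4 * (μ - ν)) / (4 * μ) := by
    rw [show 4 * μ ^ 2 = μ * (4 * μ) by ring, ← div_div]
    exact div_le_div_of_nonneg_right hb (by positivity)
  have hEKH' : EK / μ ≤ EH / μ := div_le_div_of_nonneg_right hEKH hμ.le
  have : EK / ν - D / (4 * ν ^ 2) - EK / μ + (D / ν + 4 * (μ - ν)) / (4 * μ) < 2 * (μ - ν) / μ := by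
    rw [← sub_pos]
    field_simp
    nlinarith [mul_pos hD hk, mul_nonneg (sub_nonneg.2 hEK) hk.le]
  linarith

end ScoreBounds

section Graph

variable {V : Type} [Fintype V] [DecidableEq V]

theorem sum_degSum_parts (G : SimpleGraph V) (P : Finpartition (univ : Finset V)) :
    ∑ A ∈ P.parts, degSum G A = 2 * edgeCount G := by
  calc ∑ A ∈ P.parts, degSum G A = ∑ v ∈ P.parts.biUnion id, G.degree v :=
        (sum_biUnion P.disjoint).symm
    _ = 2 * edgeCount G := by rw [P.biUnion_parts, G.sum_degrees_eq_twice_card_edges]; rfl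

theorem sum_card_filter_subset_parts_le (P : Finpartition (univ : Finset V))
    (S : Finset (Sym2 V)) :
    ∑ A ∈ P.parts, #{e ∈ S | ∀ v ∈ e, v ∈ A} ≤ #S := by
  rw [← card_biUnion]
  · exact card_le_card (biUnion_subset.2 fun A _ => filter_subset _ _)
  · intro A hA B hB hAB
    refine disjoint_left.2 fun e heA heB => ?_
    have hv := Sym2.out_fst_mem e
    exact disjoint_left.1 (P.disjoint hA hB hAB) ((mem_filter.1 heA).2 _ hv)
      ((mem_filter.1 heB).2 _ hv)

theorem degSum_eq_sum_card_filter_mem (G : SimpleGraph V) (A : Finset V) :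
    degSum G A = ∑ e ∈ G.edgeFinset, #{v ∈ A | v ∈ e} := by
  simp only [degSum, ← G.card_incidenceFinset_eq_degree, G.incidenceFinset_eq_filter, card_filter]
  exact sum_comm

theorem card_filter_mem_le (A : Finset V) (e : Sym2 V) :
    #{v ∈ A | v ∈ e} ≤ 1 + if ∀ v ∈ e, v ∈ A then 1 else 0 := by
  have hsub : {v ∈ A | v ∈ e} ⊆ e.toFinset := fun v hv => Sym2.mem_toFinset.2 (mem_filter.1 hv).2
  have htwo : #e.toFinset ≤ 2 := by rw [Sym2.card_toFinset]; split_ifs <;> omega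
  split_ifs with hA
  · exact (card_le_card hsub).trans htwo
  · obtain ⟨v, hve, hvA⟩ := not_forall₂.1 hA
    have hssub : {v ∈ A | v ∈ e} ⊂ e.toFinset :=
      ssubset_of_subset_of_ne hsub fun h => hvA (mem_filter.1 (h ▸ Sym2.mem_toFinset.2 hve)).1
    have := card_lt_card hssub
    omega

theorem degSum_le_edgeCount_add_intEdges (G : SimpleGraph V) (A : Finset V) :
    degSum G A ≤ edgeCount G + intEdges G A := by
  rw [degSum_eq_sum_card_filter_mem, edgeCount, intEdges, card_eq_sum_ones, card_filter,
    ← sum_add_distrib]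
  exact sum_le_sum fun e _ => card_filter_mem_le A e

theorem degSum_le_edgeCount_add_sum_intEdges (G : SimpleGraph V)
    {P : Finpartition (univ : Finset V)} {A : Finset V} (hA : A ∈ P.parts) :
    degSum G A ≤ edgeCount G + ∑ B ∈ P.parts, intEdges G B :=
  (degSum_le_edgeCount_add_intEdges G A).trans
    (Nat.add_le_add_left (single_le_sum (fun B _ => Nat.zero_le (intEdges G B)) hA) _)

theorem degSum_mono {K H : SimpleGraph V} (h : K ≤ H) (A : Finset V) :
    degSum K A ≤ degSum H A :=
  sum_le_sum fun _ _ => SimpleGraph.degree_le_of_le h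

theorem edgeCount_mono {K H : SimpleGraph V} (h : K ≤ H) : edgeCount K ≤ edgeCount H :=
  card_le_card (SimpleGraph.edgeFinset_mono h)

theorem edgeCount_sup (G G' : SimpleGraph V) :
    edgeCount (G ⊔ G') = #(G.edgeFinset ∪ G'.edgeFinset) := by
  unfold edgeCount
  congr 1
  ext e
  simp

theorem sum_intEdges_le (G : SimpleGraph V) (P : Finpartition (univ : Finset V)) :
    ∑ A ∈ P.parts, intEdges G A ≤ edgeCount G :=
  sum_card_filter_subset_parts_le P G.edgeFinset

theorem intEdges_eq_add {K H : SimpleGraph V} (h : K ≤ H) (A : Finset V) :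
    intEdges H A = intEdges K A + #{e ∈ H.edgeFinset \ K.edgeFinset | ∀ v ∈ e, v ∈ A} := by
  simp only [intEdges, card_filter]
  rw [← sum_sdiff (SimpleGraph.edgeFinset_mono h), add_comm]

theorem sum_intEdges_add_edgeCount_le {K H : SimpleGraph V} (h : K ≤ H)
    (P : Finpartition (univ : Finset V)) :
    ∑ A ∈ P.parts, intEdges H A + edgeCount K ≤ ∑ A ∈ P.parts, intEdges K A + edgeCount H := by
  have hsdiff := card_sdiff_add_card_eq_card (SimpleGraph.edgeFinset_mono h)
  have hnew := sum_card_filter_subset_parts_le P (H.edgeFinset \ K.edgeFinset)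
  simp only [intEdges_eq_add h, sum_add_distrib, edgeCount]
  omega

theorem sum_intEdges_mono {K H : SimpleGraph V} (h : K ≤ H) (P : Finpartition (univ : Finset V)) :
    ∑ A ∈ P.parts, intEdges K A ≤ ∑ A ∈ P.parts, intEdges H A :=
  sum_le_sum fun A _ => (intEdges_eq_add h A).symm ▸ Nat.le_add_right _ _

theorem abs_modScore_le_one (G : SimpleGraph V) (P : Finpartition (univ : Finset V)) :
    |modScore G P| ≤ 1 := by
  unfold modScore
  split_ifs with h0
  · simp
  have hm : (0 : ℝ) < edgeCount G := by exact_mod_cast Nat.pos_of_ne_zero h0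
  refine abs_sub_le_of_nonneg_of_le (by positivity) ?_ (by positivity) ?_
  · rw [div_le_one hm]
    exact_mod_cast sum_intEdges_le G P
  · rw [div_le_one (by positivity)]
    calc ∑ A ∈ P.parts, (degSum G A : ℝ) ^ 2 ≤ (∑ A ∈ P.parts, (degSum G A : ℝ)) ^ 2 :=
          sum_sq_le_sq_sum_of_nonneg fun _ _ => Nat.cast_nonneg _
      _ = 4 * (edgeCount G : ℝ) ^ 2 := by
          rw [← Nat.cast_sum, sum_degSum_parts]
          push_cast
          ring

theorem abs_modScore_sub_lt_of_lt {K H : SimpleGraph V} (h : K < H)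
    (P : Finpartition (univ : Finset V)) :
    |modScore K P - modScore H P| < 2 * ((edgeCount H : ℝ) - edgeCount K) / edgeCount H := by
  have hlt : edgeCount K < edgeCount H := card_lt_card (SimpleGraph.edgeFinset_strict_mono h)
  have hμ : (0 : ℝ) < edgeCount H := by exact_mod_cast Nat.zero_lt_of_lt hlt
  rcases Nat.eq_zero_or_pos (edgeCount K) with hK | hK
  · rw [modScore, if_pos hK, hK, zero_sub, abs_neg, Nat.cast_zero, sub_zero, mul_div_assoc,
      div_self hμ.ne', mul_one]
    linarith [abs_modScore_le_one H P]
  rw [modScore, modScore, if_neg hK.ne', if_neg (Nat.pos_of_ne_zero (by omega)).ne']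
  have hν : (0 : ℝ) < edgeCount K := by exact_mod_cast hK
  have hνμ : (edgeCount K : ℝ) < edgeCount H := by exact_mod_cast hlt
  have hvol : ∀ G : SimpleGraph V, ∑ A ∈ P.parts, (degSum G A : ℝ) = 2 * edgeCount G := fun G => by
    exact_mod_cast sum_degSum_parts G P
  have hint : ∑ A ∈ P.parts, (intEdges K A : ℝ) ≤ edgeCount K := by
    exact_mod_cast sum_intEdges_le K P
  have hmono : ∑ A ∈ P.parts, (intEdges K A : ℝ) ≤ ∑ A ∈ P.parts, (intEdges H A : ℝ) := by
    exact_mod_cast sum_intEdges_mono h.le P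
  have hnew : ∑ A ∈ P.parts, (intEdges H A : ℝ)
      ≤ ∑ A ∈ P.parts, (intEdges K A : ℝ) + ((edgeCount H : ℝ) - edgeCount K) := by
    have := sum_intEdges_add_edgeCount_le h.le P
    have : ∑ A ∈ P.parts, (intEdges H A : ℝ) + edgeCount K
        ≤ ∑ A ∈ P.parts, (intEdges K A : ℝ) + edgeCount H := by exact_mod_cast this
    linarith
  have hpart : ∀ A ∈ P.parts, (degSum K A : ℝ) ≤ edgeCount K + ∑ B ∈ P.parts, (intEdges K B : ℝ) :=
    fun A hA => by exact_mod_cast degSum_le_edgeCount_add_sum_intEdges K hA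
  have hdeg : ∀ A ∈ P.parts, (degSum K A : ℝ) ≤ degSum H A := fun A _ => by
    exact_mod_cast degSum_mono h.le A
  have hEK : (0 : ℝ) ≤ ∑ A ∈ P.parts, (intEdges K A : ℝ) := sum_nonneg fun _ _ => Nat.cast_nonneg _
  rw [abs_sub_lt_iff]
  exact ⟨score_before_sub_score_after_lt (a := fun A => (degSum K A : ℝ))
      (b := fun A => (degSum H A : ℝ)) hν hνμ hdeg (hvol K) (hvol H) hint hmono,
    score_after_sub_score_before_lt (a := fun A => (degSum K A : ℝ))
      (b := fun A => (degSum H A : ℝ)) hν hνμ (fun _ _ => Nat.cast_nonneg _) hdeg (hvol K)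
      hEK hnew hpart⟩

theorem abs_modScore_sub_le_of_le {K H : SimpleGraph V} (h : K ≤ H)
    (P : Finpartition (univ : Finset V)) :
    |modScore K P - modScore H P| ≤ 2 * ((edgeCount H : ℝ) - edgeCount K) / edgeCount H := by
  rcases h.lt_or_eq with hlt | rfl
  · exact (abs_modScore_sub_lt_of_lt hlt P).le
  · simp

theorem abs_modScore_sub_lt_of_ne {G G' : SimpleGraph V} (hne : G ≠ G')
    (P : Finpartition (univ : Finset V)) :
    |modScore G P - modScore G' P| <
      2 * (#(symmDiff G.edgeFinset G'.edgeFinset) : ℝ) / edgeCount (G ⊔ G') := by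
  have hcard : (#(symmDiff G.edgeFinset G'.edgeFinset) : ℝ)
      = ((edgeCount (G ⊔ G') : ℝ) - edgeCount G) + ((edgeCount (G ⊔ G') : ℝ) - edgeCount G') := by
    have := card_symmDiff_add_card_add_card G.edgeFinset G'.edgeFinset
    rw [← edgeCount_sup] at this
    have : (#(symmDiff G.edgeFinset G'.edgeFinset) : ℝ) + edgeCount G + edgeCount G'
        = 2 * edgeCount (G ⊔ G') := by exact_mod_cast this
    linarith
  have hG := abs_modScore_sub_le_of_le (le_sup_left : G ≤ G ⊔ G') P
  have hG' := abs_modScore_sub_le_of_le (le_sup_right : G' ≤ G ⊔ G') P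
  have htri := abs_sub_le (modScore G P) (modScore (G ⊔ G') P) (modScore G' P)
  rw [abs_sub_comm (modScore (G ⊔ G') P)] at htri
  rw [hcard, mul_add, add_div]
  rcases eq_or_ne G (G ⊔ G') with hG_eq | hG_ne
  · have hlt : G' < G ⊔ G' := lt_of_le_of_ne le_sup_right fun h => hne (hG_eq.trans h.symm)
    linarith [abs_modScore_sub_lt_of_lt hlt P]
  · linarith [abs_modScore_sub_lt_of_lt (lt_of_le_of_ne le_sup_left hG_ne) P]

end Graph

/-- Lemma (modularity and edit distance of edge sets): if G = (V, E) and G′ = (V, E′)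
are distinct graphs on the same finite vertex set, then for every partition 𝒜 of V,
|q_𝒜(G) − q_𝒜(G′)| < 2·|E △ E′| / max(|E|, |E′|), and moreover
|q*(G) − q*(G′)| < 2·|E △ E′| / max(|E|, |E′|). -/
theorem statement10 (V : Type) [Fintype V] [DecidableEq V] (G G' : SimpleGraph V)
    (hne : G ≠ G') :
    (∀ A : Finpartition (univ : Finset V),
      |modScore G A - modScore G' A| <
        2 * (((symmDiff G.edgeFinset G'.edgeFinset).card : ℝ)) /
          ((max (edgeCount G) (edgeCount G') : ℕ) : ℝ)) ∧
    |modularity G - modularity G'| <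
      2 * (((symmDiff G.edgeFinset G'.edgeFinset).card : ℝ)) /
        ((max (edgeCount G) (edgeCount G') : ℕ) : ℝ) := by
  have hmax_pos : 0 < max (edgeCount G) (edgeCount G') := by
    by_contra! h0
    refine hne (SimpleGraph.edgeFinset_inj.1 ?_)
    rw [card_eq_zero.1 (Nat.eq_zero_of_le_zero (le_of_max_le_left h0)),
      card_eq_zero.1 (Nat.eq_zero_of_le_zero (le_of_max_le_right h0))]
  have hmax_le : max (edgeCount G) (edgeCount G') ≤ edgeCount (G ⊔ G') :=
    max_le (edgeCount_mono le_sup_left) (edgeCount_mono le_sup_right)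
  have hpart : ∀ A : Finpartition (univ : Finset V),
      |modScore G A - modScore G' A| <
        2 * (((symmDiff G.edgeFinset G'.edgeFinset).card : ℝ)) /
          ((max (edgeCount G) (edgeCount G') : ℕ) : ℝ) := fun A =>
    (abs_modScore_sub_lt_of_ne hne A).trans_le
      (div_le_div_of_nonneg_left (by positivity) (by exact_mod_cast hmax_pos)
        (by exact_mod_cast hmax_le))
  exact ⟨hpart, abs_ciSup_sub_ciSup_lt hpart⟩
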